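/- Let (S, φ) be an LP-Type problem of dimension δ with |S| = n, and let R be a uniformly random subset of size r. Then the expected number of violators satisfies E[|V(R)|] ≤ δ(n − r)/(r + 1). -/

import Mathlib

open Finset

/-! Double counting the pairs (R, s) with |R| = r and s a violator of R, i.e. the pairs
(Q, s) with |Q| = r + 1 and s extreme in Q = R ∪ {s}, turns the sum of the |V(R)| into the
sum of the |X(Q)|. By monotonicity every extreme element of Q lies in every B ⊆ Q with
φ(B) = φ(Q), in particular in a basis of Q, so |X(Q)| ≤ δ; finally
binom(n, r+1) / binom(n, r) = (n - r)/(r + 1). -/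

namespace LPType

theorem exists_basis_subset {α β : Type*} [LinearOrder β] {φ : Finset α → β}
    (hφ : Monotone φ) (Q : Finset α) :
    ∃ B ⊆ Q, φ B = φ Q ∧ ∀ B' ⊂ B, φ B' < φ B := by
  obtain ⟨B, hBQ, hB⟩ := exists_minimal_le_of_wellFoundedLT (fun B => φ B = φ Q) Q rfl
  refine ⟨B, hBQ, hB.prop, fun B' hB' => (hφ hB'.subset).lt_of_ne fun h => ?_⟩
  exact hB.not_prop_of_lt hB' (h.trans hB.prop)

variable {α β : Type*} [DecidableEq α] [DecidableEq β]

def violators (φ : Finset α → β) (S R : Finset α) : Finset α :=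
  (S \ R).filter fun s => φ (insert s R) ≠ φ R

def extremes (φ : Finset α → β) (Q : Finset α) : Finset α :=
  Q.filter fun s => φ (Q.erase s) ≠ φ Q

theorem sum_card_violators_eq_sum_card_extremes (φ : Finset α → β) (S : Finset α) (r : ℕ) :
    ∑ R ∈ S.powersetCard r, (violators φ S R).card
      = ∑ Q ∈ S.powersetCard (r + 1), (extremes φ Q).card := by
  simp only [← card_sigma, violators, extremes]
  refine card_nbij' (fun p => ⟨insert p.2 p.1, p.2⟩) (fun p => ⟨p.1.erase p.2, p.2⟩)
    ?_ ?_ ?_ ?_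
  · rintro ⟨R, s⟩ hp
    simp only [mem_coe, mem_sigma, mem_powersetCard, mem_filter, mem_sdiff] at hp ⊢
    obtain ⟨⟨hRS, rfl⟩, ⟨hsS, hsR⟩, hφ⟩ := hp
    exact ⟨⟨insert_subset hsS hRS, card_insert_of_notMem hsR⟩, mem_insert_self _ _,
      by rw [erase_insert hsR]; exact hφ.symm⟩
  · rintro ⟨Q, s⟩ hp
    simp only [mem_coe, mem_sigma, mem_powersetCard, mem_filter, mem_sdiff] at hp ⊢
    obtain ⟨⟨hQS, hQcard⟩, hsQ, hφ⟩ := hp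
    exact ⟨⟨(erase_subset _ _).trans hQS, by rw [card_erase_of_mem hsQ, hQcard]; rfl⟩,
      ⟨hQS hsQ, notMem_erase _ _⟩, by rw [insert_erase hsQ]; exact hφ.symm⟩
  · rintro ⟨R, s⟩ hp
    simp only [mem_coe, mem_sigma, mem_filter, mem_sdiff] at hp
    simp [erase_insert hp.2.1.2]
  · rintro ⟨Q, s⟩ hp
    simp only [mem_coe, mem_sigma, mem_filter] at hp
    simp [insert_erase hp.2.1]

variable [LinearOrder β] {φ : Finset α → β}

theorem extremes_subset (hφ : Monotone φ) {B Q : Finset α} (hBQ : B ⊆ Q) (hB : φ B = φ Q) :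
    extremes φ Q ⊆ B := by
  intro x hx
  rw [extremes, mem_filter] at hx
  by_contra hxB
  refine hx.2 (le_antisymm (hφ (erase_subset _ _)) ?_)
  exact hB ▸ hφ fun b hb => mem_erase.mpr ⟨fun h => hxB (h ▸ hb), hBQ hb⟩

theorem card_extremes_le (hφ : Monotone φ) {S : Finset α} {δ : ℕ}
    (hdim : ∀ B ⊆ S, (∀ B' ⊂ B, φ B' < φ B) → B.card ≤ δ) {Q : Finset α}
    (hQS : Q ⊆ S) : (extremes φ Q).card ≤ δ := by
  obtain ⟨B, hBQ, hB, hBbasis⟩ := exists_basis_subset hφ Q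
  exact (card_le_card (extremes_subset hφ hBQ hB)).trans (hdim B (hBQ.trans hQS) hBbasis)

end LPType

theorem Nat.cast_choose_succ_div_cast_choose {n r : ℕ} (hr : r ≤ n) :
    (n.choose (r + 1) : ℝ) / n.choose r = (n - r) / (r + 1) := by
  have hpos : (0 : ℝ) < n.choose r := by exact_mod_cast Nat.choose_pos hr
  rw [div_eq_div_iff hpos.ne' (by positivity)]
  rw [← Nat.cast_sub hr]
  exact_mod_cast (Nat.choose_succ_right_eq n r).trans (mul_comm _ _)

open LPType in
theorem expected_violators_le_general {α β : Type*} [DecidableEq α] [DecidableEq β] [LinearOrder β]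
    (S : Finset α) (n : ℕ) (hn : S.card = n) (φ : Finset α → β) (δ : ℕ)
    (hmono : ∀ A B : Finset α, A ⊆ B → φ A ≤ φ B)
    (hdim : ∀ B : Finset α, B ⊆ S → (∀ B' : Finset α, B' ⊂ B → φ B' < φ B) →
      B.card ≤ δ)
    (r : ℕ) (hr : r ≤ n) :
    (∑ R ∈ S.powersetCard r,
        (((S \ R).filter (fun s => φ (insert s R) ≠ φ R)).card : ℝ)) / (n.choose r)
      ≤ (δ : ℝ) * ((n : ℝ) - r) / ((r : ℝ) + 1) := by
  have hφ : Monotone φ := fun A B h => hmono A B h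
  have hsum : ∑ R ∈ S.powersetCard r, (violators φ S R).card ≤ n.choose (r + 1) * δ := by
    rw [sum_card_violators_eq_sum_card_extremes, ← hn, ← card_powersetCard, ← smul_eq_mul,
      ← sum_const]
    exact sum_le_sum fun Q hQ => card_extremes_le hφ hdim (mem_powersetCard.mp hQ).1
  calc (∑ R ∈ S.powersetCard r, ((violators φ S R).card : ℝ)) / n.choose r
      ≤ (n.choose (r + 1) * δ : ℕ) / n.choose r := by
        gcongr; exact_mod_cast hsum
    _ = δ * ((n.choose (r + 1) : ℝ) / n.choose r) := by push_cast; ring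
    _ = δ * (n - r) / (r + 1) := by rw [Nat.cast_choose_succ_div_cast_choose hr, mul_div_assoc]

/-- In an LP-Type problem of dimension δ with |S| = n, the expected number of
violators of a uniformly random subset of size r is at most δ(n-r)/(r+1). -/
theorem expected_violators_le {α β : Type*} [DecidableEq α] [DecidableEq β] [LinearOrder β]
    (S : Finset α) (n : ℕ) (hn : S.card = n) (φ : Finset α → β) (δ : ℕ)
    (hmono : ∀ A B : Finset α, A ⊆ B → φ A ≤ φ B)
    (hloc : ∀ (A B : Finset α) (x : α), A ⊆ B → φ A = φ B →
      φ A = φ (insert x A) → φ A = φ (insert x B))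
    (hdim : ∀ B : Finset α, B ⊆ S → (∀ B' : Finset α, B' ⊂ B → φ B' < φ B) →
      B.card ≤ δ)
    (r : ℕ) (hr : r ≤ n) :
    (∑ R ∈ S.powersetCard r,
        (((S \ R).filter (fun s => φ (insert s R) ≠ φ R)).card : ℝ)) / (n.choose r)
      ≤ (δ : ℝ) * ((n : ℝ) - r) / ((r : ℝ) + 1) :=
  expected_violators_le_general S n hn φ δ hmono hdim r hr
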